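/- With p(x)=(1-x²)W(x), the operator D̃ = (d/dx)((x-Ω)(d/dx)p(x))W(x)^{-1} + xA relates to D = (d²/dx²)(1-x²) + (d/dx)(-x(α+β+2)Id + (α-β)T) by D̃ = (x-Ω)D + (1-x²)(d/dx) + xA, i.e., for every twice differentiable matrix function f, (fD̃)(x) = (x-Ω)(fD)(x) + (1-x²)f'(x) + x f(x) A. -/

import Mathlib

open Matrix Real Finset

noncomputable section

attribute [local instance] Matrix.normedAddCommGroup Matrix.normedSpace

/-- The scalar Jacobi weight `w_{α,β}(x) = (1-x)^α (1+x)^β`. -/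
def jacobiW (α β x : ℝ) : ℝ := (1 - x) ^ α * (1 + x) ^ β

/-- The 2×2 Jacobi-type matrix weight `W_{(α,β)}`. -/
def Wmat (α β x : ℝ) : Matrix (Fin 2) (Fin 2) ℝ :=
  (1 / 2 : ℝ) •
    !![jacobiW α β x + jacobiW β α x, -jacobiW α β x + jacobiW β α x;
       -jacobiW α β x + jacobiW β α x, jacobiW α β x + jacobiW β α x]

/-- The permutation matrix `T`. -/
def Tmat : Matrix (Fin 2) (Fin 2) ℝ := !![0, 1; 1, 0]

/-- The classical Jacobi polynomial
`p_n^{(α,β)}(x) = ((α+1)_n / n!) ₂F₁(-n, n+α+β+1; α+1; (1-x)/2)` (a terminating sum). -/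
def jacobiP (α β : ℝ) (n : ℕ) (x : ℝ) : ℝ :=
  (ascPochhammer ℝ n).eval (α + 1) / (n.factorial : ℝ) *
    ∑ k ∈ Finset.range (n + 1),
      ((ascPochhammer ℝ k).eval (-(n : ℝ)) * (ascPochhammer ℝ k).eval ((n : ℝ) + α + β + 1)) /
        ((ascPochhammer ℝ k).eval (α + 1) * (k.factorial : ℝ)) * ((1 - x) / 2) ^ k

/-- The 2×2 matrix Jacobi-type orthogonal polynomial `P_n^{(α,β)}`. -/
def Pmat (α β : ℝ) (n : ℕ) (x : ℝ) : Matrix (Fin 2) (Fin 2) ℝ :=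
  (1 / 2 : ℝ) •
    !![jacobiP α β n x + jacobiP β α n x, -jacobiP α β n x + jacobiP β α n x;
       -jacobiP α β n x + jacobiP β α n x, jacobiP α β n x + jacobiP β α n x]

/-- The squared-norm constant `h_n`. -/
def hJ (α β : ℝ) (n : ℕ) : ℝ :=
  2 ^ (α + β + 1) * Real.Gamma (α + n + 1) * Real.Gamma (β + n + 1) /
    ((α + β + 2 * n + 1) * (n.factorial : ℝ) * Real.Gamma (α + β + n + 1))

/-- The differential operator `D̃` acting on the right on 2×2 matrix valued functions:
`(fD̃)(x) = ((x-Ω) f'(x) p(x))' W(x)⁻¹ + x N(N+α+β+2) f(x)`, where `p(x) = (1-x²)W(x)`. -/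
def Dtilde (α β Ω : ℝ) (N : ℕ) (f : ℝ → Matrix (Fin 2) (Fin 2) ℝ) (x : ℝ) :
    Matrix (Fin 2) (Fin 2) ℝ :=
  deriv (fun t => (t - Ω) • (deriv f t * ((1 - t ^ 2) • Wmat α β t))) x * (Wmat α β x)⁻¹ +
    (x * (N * (N + α + β + 2))) • f x

/-
The weight satisfies the Pearson-type equation `((1 - x²) W)' = M W` with
`M = -(α + β + 2) x Id + (α - β) T`: on the eigenspaces of `T` (eigenvalues `±1`, projections
`(1 ± T)/2`) the weight `W` acts by the scalar weights `w_{β,α}` and `w_{α,β}`, and each of these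
satisfies `((1 - x²) w_{α,β})' = (β - α - (α + β + 2) x) w_{α,β}`. Expanding the outer derivative of
`D̃` by the product rule, every term therefore acquires the right factor `W`, which cancels against
`W⁻¹`.
-/

theorem HasDerivAt.matrix_mul {𝕜 : Type*} [NontriviallyNormedField 𝕜] [CompleteSpace 𝕜]
    {m n p : Type*} [Fintype m] [Fintype n] [Fintype p]
    {f : 𝕜 → Matrix m n 𝕜} {g : 𝕜 → Matrix n p 𝕜} {f' : Matrix m n 𝕜} {g' : Matrix n p 𝕜}
    {x : 𝕜} (hf : HasDerivAt f f' x) (hg : HasDerivAt g g' x) :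
    HasDerivAt (fun t => f t * g t) (f' * g x + f x * g') x := by
  let B : Matrix m n 𝕜 →L[𝕜] Matrix n p 𝕜 →L[𝕜] Matrix m p 𝕜 :=
    LinearMap.toContinuousLinearMap
      (LinearMap.toContinuousLinearMap.toLinearMap ∘ₗ mulLinearMap 𝕜 (A := 𝕜))
  rw [add_comm]
  exact B.hasDerivAt_of_bilinear (fun _ => hf) (fun _ => hg)

section JacobiWeight

variable {x : ℝ}

theorem jacobiW_pos {α β : ℝ} (hx : x ∈ Set.Ioo (-1 : ℝ) 1) : 0 < jacobiW α β x :=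
  mul_pos (rpow_pos_of_pos (by linarith [hx.2]) _) (rpow_pos_of_pos (by linarith [hx.1]) _)

theorem hasDerivAt_one_sub_sq_mul_jacobiW (α β : ℝ) (hm : 1 - x ≠ 0) (hp : 1 + x ≠ 0) :
    HasDerivAt (fun t => (1 - t ^ 2) * jacobiW α β t)
      ((β - α - (α + β + 2) * x) * jacobiW α β x) x := by
  have hw : HasDerivAt (jacobiW α β)
      (-1 * α * (1 - x) ^ (α - 1) * (1 + x) ^ β + (1 - x) ^ α * (1 * β * (1 + x) ^ (β - 1))) x :=
    (((hasDerivAt_id x).const_sub 1).rpow_const (Or.inl hm)).mul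
      (((hasDerivAt_id x).const_add 1).rpow_const (Or.inl hp))
  refine (((hasDerivAt_pow 2 x).const_sub 1).mul hw).congr_deriv ?_
  rw [rpow_sub_one hm, rpow_sub_one hp, jacobiW]
  field_simp
  ring

theorem isUnit_det_Wmat {α β : ℝ} (hx : x ∈ Set.Ioo (-1 : ℝ) 1) : IsUnit (Wmat α β x).det := by
  have hdet : (Wmat α β x).det = jacobiW α β x * jacobiW β α x := by
    rw [Wmat, det_smul, det_fin_two_of, Fintype.card_fin]
    ring
  rw [hdet]
  exact (mul_pos (jacobiW_pos hx) (jacobiW_pos hx)).ne'.isUnit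

theorem one_sub_sq_smul_Wmat_eq (α β t : ℝ) :
    (1 - t ^ 2) • Wmat α β t = (1 / 2 : ℝ) •
      (((1 - t ^ 2) * jacobiW α β t) • (1 - Tmat) + ((1 - t ^ 2) * jacobiW β α t) • (1 + Tmat)) := by
  ext i j
  fin_cases i <;> fin_cases j <;> simp [Wmat, Tmat] <;> ring

theorem hasDerivAt_one_sub_sq_smul_Wmat (α β : ℝ) (hm : 1 - x ≠ 0) (hp : 1 + x ≠ 0) :
    HasDerivAt (fun t => (1 - t ^ 2) • Wmat α β t)
      (((-(x * (α + β + 2))) • (1 : Matrix (Fin 2) (Fin 2) ℝ) + (α - β) • Tmat) * Wmat α β x) x := by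
  have hsplit := (((hasDerivAt_one_sub_sq_mul_jacobiW α β hm hp).smul_const (1 - Tmat)).add
    ((hasDerivAt_one_sub_sq_mul_jacobiW β α hm hp).smul_const (1 + Tmat))).const_smul (1 / 2 : ℝ)
  have hval : ((-(x * (α + β + 2))) • (1 : Matrix (Fin 2) (Fin 2) ℝ) + (α - β) • Tmat) *
      Wmat α β x = (1 / 2 : ℝ) • (((β - α - (α + β + 2) * x) * jacobiW α β x) • (1 - Tmat) +
        ((α - β - (β + α + 2) * x) * jacobiW β α x) • (1 + Tmat)) := by
    ext i j
    fin_cases i <;> fin_cases j <;> simp [Wmat, Tmat, mul_apply, Fin.sum_univ_two] <;> ring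
  rw [funext (one_sub_sq_smul_Wmat_eq α β), hval]
  exact hsplit

end JacobiWeight

theorem Dtilde_eq_shifted_D_general (α β : ℝ)
    (Ω : ℝ) (N : ℕ) (f : ℝ → Matrix (Fin 2) (Fin 2) ℝ) (hf : ContDiff ℝ 2 f)
    (x : ℝ) (hx : x ∈ Set.Ioo (-1 : ℝ) 1) :
    Dtilde α β Ω N f x =
      (x - Ω) •
          ((1 - x ^ 2) • deriv (deriv f) x +
            deriv f x *
              ((-(x * (α + β + 2))) • (1 : Matrix (Fin 2) (Fin 2) ℝ) + (α - β) • Tmat)) +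
        (1 - x ^ 2) • deriv f x + (x * (N * (N + α + β + 2))) • f x := by
  have hp := hasDerivAt_one_sub_sq_smul_Wmat α β (by linarith [hx.2]) (by linarith [hx.1])
  have hflux := ((hasDerivAt_id' x).sub_const Ω).fun_smul
    ((hf.differentiable_deriv_two x).hasDerivAt.matrix_mul hp)
  set M : Matrix (Fin 2) (Fin 2) ℝ := (-(x * (α + β + 2))) • 1 + (α - β) • Tmat
  have hderiv : deriv (fun t => (t - Ω) • (deriv f t * ((1 - t ^ 2) • Wmat α β t))) x =
      ((x - Ω) • ((1 - x ^ 2) • deriv (deriv f) x + deriv f x * M) + (1 - x ^ 2) • deriv f x) *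
        Wmat α β x := by
    refine hflux.deriv.trans ?_
    simp only [one_smul, add_mul, smul_mul_assoc, mul_smul_comm, mul_assoc]
    -- the two sides differ only in the `SMul` instance path (normed-space vs. matrix)
    rfl
  rw [Dtilde, hderiv, mul_nonsing_inv_cancel_right _ _ (isUnit_det_Wmat hx)]

/-- `D̃ = (x-Ω) D + (1-x²) d/dx + x A`, where
`(fD)(x) = f''(x)(1-x²) + f'(x)(-x(α+β+2)Id + (α-β)T)` and `A = N(N+α+β+2)Id`. -/
theorem Dtilde_eq_shifted_D (α β : ℝ) (hα : -1 < α) (hβ : -1 < β)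
    (Ω : ℝ) (N : ℕ) (f : ℝ → Matrix (Fin 2) (Fin 2) ℝ) (hf : ContDiff ℝ 2 f)
    (x : ℝ) (hx : x ∈ Set.Ioo (-1 : ℝ) 1) :
    Dtilde α β Ω N f x =
      (x - Ω) •
          ((1 - x ^ 2) • deriv (deriv f) x +
            deriv f x *
              ((-(x * (α + β + 2))) • (1 : Matrix (Fin 2) (Fin 2) ℝ) + (α - β) • Tmat)) +
        (1 - x ^ 2) • deriv f x + (x * (N * (N + α + β + 2))) • f x :=
  Dtilde_eq_shifted_D_general α β Ω N f hf x hx
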